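/- arXiv:2501.01935 — 2 statements merged into one kernel-verified Lean document; each statement's English description precedes it below -/
import Mathlib

section
/- Let H satisfy Condition Q_∞(s,κ) with κ < 1/2 for matrix N. For any ν, ν̂ ∈ ℝ^n with ‖ν̂‖₁ ≤ ‖ν‖₁ and z = ν̂ − ν, ρ = ‖H^T N z‖_∞: ‖z‖_∞ ≤ (1−2κ)^{-1}(ρ + ‖ν − ν^s‖₁/s). -/
/-! The error `z = ν̂ - ν` of a vector with `‖ν̂‖₁ ≤ ‖ν‖₁` lies in a cone: off the support `S` of
the `s` largest entries of `ν` its mass is at most its mass on `S` plus `2‖ν - νˢ‖₁`, so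
`‖z‖₁ ≤ 2 s ‖z‖_∞ + 2‖ν - νˢ‖₁`. Feeding this into `Q_∞(s,κ)` gives
`‖z‖_∞ ≤ ρ + 2κ‖z‖_∞ + 2κ‖ν - νˢ‖₁ / s`, and `κ < 1/2` lets the `‖z‖_∞` term be absorbed. -/

open Matrix

/-- Sum of the `min(k,n)` largest magnitudes of entries of `z` (so that
`‖ν − νˢ‖₁ = ‖ν‖₁ − knorm s ν`, where `νˢ` keeps the `s` largest-magnitude entries). -/
noncomputable def knorm {n : ℕ} (k : ℕ) (z : Fin n → ℝ) : ℝ :=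
  sSup {v : ℝ | ∃ S : Finset (Fin n), S.card = min k n ∧ v = ∑ i ∈ S, |z i|}

theorem exists_card_eq_knorm_eq_sum {n : ℕ} (k : ℕ) (z : Fin n → ℝ) :
    ∃ S : Finset (Fin n), S.card = min k n ∧ knorm k z = ∑ i ∈ S, |z i| := by
  set A := {v : ℝ | ∃ S : Finset (Fin n), S.card = min k n ∧ v = ∑ i ∈ S, |z i|}
  have hA : A.Nonempty := by
    obtain ⟨S, -, hS⟩ := Finset.exists_subset_card_eq (s := (Finset.univ : Finset (Fin n)))
      (n := min k n) (by simp)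
    exact ⟨_, S, hS, rfl⟩
  have hfin : A.Finite :=
    (Set.finite_range fun S : Finset (Fin n) => ∑ i ∈ S, |z i|).subset
      fun _ ⟨S, _, hv⟩ => ⟨S, hv.symm⟩
  exact hA.csSup_mem hfin

theorem knorm_le_sum_abs {n : ℕ} (k : ℕ) (z : Fin n → ℝ) : knorm k z ≤ ∑ i, |z i| := by
  obtain ⟨S, -, hS⟩ := exists_card_eq_knorm_eq_sum k z
  rw [hS]
  exact Finset.sum_le_univ_sum_of_nonneg fun i => abs_nonneg _

theorem sum_norm_sub_le_of_sum_norm_le {ι E : Type*} [Fintype ι] [DecidableEq ι]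
    [SeminormedAddCommGroup E] {x y : ι → E} (hxy : ∑ i, ‖x i‖ ≤ ∑ i, ‖y i‖) (S : Finset ι) :
    ∑ i, ‖x i - y i‖ ≤ 2 * (∑ i ∈ S, ‖x i - y i‖ + ∑ i ∈ Sᶜ, ‖y i‖) := by
  have on_S : ∑ i ∈ S, (‖y i‖ - ‖x i - y i‖) ≤ ∑ i ∈ S, ‖x i‖ :=
    Finset.sum_le_sum fun i _ => by linarith [norm_le_norm_add_norm_sub (x i) (y i)]
  have off_S : ∑ i ∈ Sᶜ, (‖x i - y i‖ - ‖y i‖) ≤ ∑ i ∈ Sᶜ, ‖x i‖ :=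
    Finset.sum_le_sum fun i _ => by linarith [norm_sub_le (x i) (y i)]
  rw [Finset.sum_sub_distrib] at on_S off_S
  rw [← Finset.sum_add_sum_compl S] at hxy ⊢
  rw [← Finset.sum_add_sum_compl S fun i => ‖y i‖] at hxy
  linarith

theorem sum_abs_sub_le_knorm {n : ℕ} (k : ℕ) {x y : Fin n → ℝ}
    (hxy : ∑ i, |x i| ≤ ∑ i, |y i|) :
    ∑ i, |x i - y i| ≤ 2 * (min k n * (⨆ i, |x i - y i|) + (∑ i, |y i| - knorm k y)) := by
  obtain ⟨S, hcard, hS⟩ := exists_card_eq_knorm_eq_sum k y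
  have hsup : ∑ i ∈ S, |x i - y i| ≤ min k n * ⨆ i, |x i - y i| := by
    simpa [hcard] using Finset.sum_le_card_nsmul S _ _
      fun i _ => le_ciSup (Finite.bddAbove_range fun i => |x i - y i|) i
  have hcompl : ∑ i ∈ Sᶜ, |y i| = ∑ i, |y i| - knorm k y := by
    rw [hS, ← Finset.sum_add_sum_compl S fun i => |y i|]
    ring
  have hcone := sum_norm_sub_le_of_sum_norm_le (x := x) (y := y) (by simpa using hxy) S
  simp only [Real.norm_eq_abs] at hcone
  linarith

/-- If `H` satisfies Condition `Q_∞(s,κ)` with `κ < 1/2`, `‖ν̂‖₁ ≤ ‖ν‖₁`,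
`z = ν̂ − ν`, `ρ = ‖HᵀNz‖_∞`, then `‖z‖_∞ ≤ (1−2κ)⁻¹(ρ + ‖ν − νˢ‖₁/s)`. -/
theorem linf_error_bound {m n : ℕ} (N H : Matrix (Fin m) (Fin n) ℝ)
    (s : ℕ) (hs : 0 < s) (hsn : s ≤ n) (κ : ℝ) (hκ0 : 0 < κ) (hκ : κ < 1 / 2)
    (hQ : ∀ w : Fin n → ℝ,
      (⨆ i, |w i|) ≤ (⨆ i, |(Hᵀ * N).mulVec w i|) + (κ / s) * ∑ i, |w i|)
    (ν νhat : Fin n → ℝ) (h1 : (∑ i, |νhat i|) ≤ ∑ i, |ν i|) :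
    (⨆ i, |νhat i - ν i|) ≤
      (1 - 2 * κ)⁻¹ * ((⨆ k, |(Hᵀ * N).mulVec (νhat - ν) k|) +
        ((∑ i, |ν i|) - knorm s ν) / s) := by
  set M := ⨆ i, |νhat i - ν i|
  set ρ := ⨆ k, |(Hᵀ * N).mulVec (νhat - ν) k|
  set d := ∑ i, |ν i| - knorm s ν
  have hs' : (0 : ℝ) < s := by exact_mod_cast hs
  have hd : 0 ≤ d := sub_nonneg.2 (knorm_le_sum_abs s ν)
  have hcone : ∑ i, |νhat i - ν i| ≤ 2 * (s * M + d) := by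
    simpa [hsn] using sum_abs_sub_le_knorm s h1
  have hQz : M ≤ ρ + κ / s * (2 * (s * M + d)) := by
    have hQ' := hQ (νhat - ν)
    simp only [Pi.sub_apply] at hQ'
    exact hQ'.trans (by gcongr)
  have hκd : 2 * κ * (d / s) ≤ d / s :=
    mul_le_of_le_one_left (div_nonneg hd hs'.le) (by linarith)
  have hexpand : κ / s * (2 * (s * M + d)) = 2 * κ * M + 2 * κ * (d / s) := by
    field_simp
  rw [← div_eq_inv_mul, le_div_iff₀ (by linarith)]
  linarith
end

section
/- Suppose ν is s-sparse (at most s nonzero entries) and ν̂ satisfies ‖ν̂‖₁ ≤ ‖ν‖₁. Then z = ν̂ − ν satisfies ‖z‖₁ ≤ 2‖z‖_{s,1}, where ‖z‖_{s,1} is the sum of the s largest magnitudes of entries of z; consequently ‖z‖₁ ≤ 2s‖z‖_∞ and ‖z‖₂ ≤ √(2s)·‖z‖_∞. -/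
open Finset

section Cone

variable {ι : Type*} [Fintype ι] [DecidableEq ι]

theorem sum_compl_abs_sub_le_sum_abs_sub {ν νhat : ι → ℝ} {S : Finset ι}
    (hS : ∀ i ∉ S, ν i = 0) (h : ∑ i, |νhat i| ≤ ∑ i, |ν i|) :
    ∑ i ∈ Sᶜ, |νhat i - ν i| ≤ ∑ i ∈ S, |νhat i - ν i| := by
  have hν : ∑ i ∈ Sᶜ, |ν i| = 0 :=
    sum_eq_zero fun i hi => by rw [hS i (mem_compl.mp hi), abs_zero]
  have hcompl : ∑ i ∈ Sᶜ, |νhat i - ν i| = ∑ i ∈ Sᶜ, |νhat i| :=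
    sum_congr rfl fun i hi => by rw [hS i (mem_compl.mp hi), sub_zero]
  have htri : ∑ i ∈ S, |ν i| ≤ ∑ i ∈ S, |νhat i| + ∑ i ∈ S, |νhat i - ν i| := by
    rw [← sum_add_distrib]
    exact sum_le_sum fun i _ => by
      linarith [abs_sub_abs_le_abs_sub (ν i) (νhat i), abs_sub_comm (ν i) (νhat i)]
  rw [← sum_add_sum_compl S, ← sum_add_sum_compl S fun i => |ν i|] at h
  linarith

theorem sum_abs_sub_le_two_mul_sum_abs_sub {ν νhat : ι → ℝ} {S : Finset ι}
    (hS : ∀ i ∉ S, ν i = 0) (h : ∑ i, |νhat i| ≤ ∑ i, |ν i|) :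
    ∑ i, |νhat i - ν i| ≤ 2 * ∑ i ∈ S, |νhat i - ν i| := by
  rw [← sum_add_sum_compl S]
  linarith [sum_compl_abs_sub_le_sum_abs_sub hS h]

end Cone

theorem sum_sq_le_iSup_abs_mul_sum_abs {ι : Type*} [Fintype ι] (z : ι → ℝ) :
    ∑ i, z i ^ 2 ≤ (⨆ i, |z i|) * ∑ i, |z i| := by
  rw [mul_sum]
  refine sum_le_sum fun i _ => ?_
  rw [← sq_abs, sq]
  exact mul_le_mul_of_nonneg_right
    (le_ciSup (f := fun j => |z j|) (Set.finite_range _).bddAbove i) (abs_nonneg _)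

theorem sqrt_sum_sq_le_sqrt_mul_iSup_abs {ι : Type*} [Fintype ι] {z : ι → ℝ} {C : ℝ}
    (h : ∑ i, |z i| ≤ C * ⨆ i, |z i|) :
    √(∑ i, z i ^ 2) ≤ √C * ⨆ i, |z i| := by
  have hM : 0 ≤ ⨆ i, |z i| := Real.iSup_nonneg fun i => abs_nonneg _
  calc √(∑ i, z i ^ 2) ≤ √(C * (⨆ i, |z i|) ^ 2) := by
        refine Real.sqrt_le_sqrt ?_
        calc ∑ i, z i ^ 2 ≤ (⨆ i, |z i|) * ∑ i, |z i| := sum_sq_le_iSup_abs_mul_sum_abs z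
          _ ≤ (⨆ i, |z i|) * (C * ⨆ i, |z i|) := by gcongr
          _ = C * (⨆ i, |z i|) ^ 2 := by ring
    _ = √C * ⨆ i, |z i| := by rw [Real.sqrt_mul' C (sq_nonneg _), Real.sqrt_sq hM]

section Knorm

variable {n : ℕ}

theorem sum_abs_le_knorm {k : ℕ} (z : Fin n → ℝ) {S : Finset (Fin n)} (hS : #S ≤ k) :
    ∑ i ∈ S, |z i| ≤ knorm k z := by
  obtain ⟨T, hST, hT⟩ := exists_superset_card_eq
    (le_min hS (by simpa using card_le_univ S)) (by simp)
  have hbdd :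
      BddAbove {v : ℝ | ∃ U : Finset (Fin n), #U = min k n ∧ v = ∑ i ∈ U, |z i|} := by
    refine ⟨∑ i, |z i|, ?_⟩
    rintro _ ⟨U, -, rfl⟩
    exact sum_le_sum_of_subset_of_nonneg (subset_univ U) fun _ _ _ => abs_nonneg _
  calc ∑ i ∈ S, |z i| ≤ ∑ i ∈ T, |z i| :=
        sum_le_sum_of_subset_of_nonneg hST fun _ _ _ => abs_nonneg _
    _ ≤ knorm k z := le_csSup hbdd ⟨T, hT, rfl⟩

theorem knorm_le_mul_iSup_abs (k : ℕ) (z : Fin n → ℝ) :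
    knorm k z ≤ k * ⨆ i, |z i| := by
  have hM : 0 ≤ ⨆ i, |z i| := Real.iSup_nonneg fun i => abs_nonneg _
  refine Real.sSup_le ?_ (by positivity)
  rintro _ ⟨U, hU, rfl⟩
  calc ∑ i ∈ U, |z i| ≤ #U • ⨆ i, |z i| :=
        sum_le_card_nsmul _ _ _ fun i _ =>
          le_ciSup (f := fun j => |z j|) (Set.finite_range _).bddAbove i
    _ ≤ k * ⨆ i, |z i| := by
        rw [nsmul_eq_mul, hU]
        gcongr
        exact_mod_cast min_le_left k n

end Knorm

theorem sparse_l1_bounds_general {n : ℕ} (s : ℕ)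
    (ν νhat : Fin n → ℝ) (hsparse : {i : Fin n | ν i ≠ 0}.toFinset.card ≤ s)
    (h1 : (∑ i, |νhat i|) ≤ ∑ i, |ν i|) :
    (∑ i, |νhat i - ν i|) ≤ 2 * knorm s (νhat - ν) ∧
    (∑ i, |νhat i - ν i|) ≤ 2 * s * (⨆ i, |νhat i - ν i|) ∧
    Real.sqrt (∑ i, (νhat i - ν i) ^ 2) ≤
      Real.sqrt (2 * s) * (⨆ i, |νhat i - ν i|) := by
  have hsupp : ∀ i ∉ {i : Fin n | ν i ≠ 0}.toFinset, ν i = 0 := by simp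
  have hcone : ∑ i, |νhat i - ν i| ≤ 2 * knorm s (νhat - ν) :=
    (sum_abs_sub_le_two_mul_sum_abs_sub hsupp h1).trans
      (by gcongr; exact sum_abs_le_knorm (νhat - ν) hsparse)
  have hl1 : ∑ i, |νhat i - ν i| ≤ 2 * s * ⨆ i, |νhat i - ν i| :=
    calc ∑ i, |νhat i - ν i| ≤ 2 * knorm s (νhat - ν) := hcone
      _ ≤ 2 * (s * ⨆ i, |νhat i - ν i|) := by
          gcongr; exact knorm_le_mul_iSup_abs s (νhat - ν)
      _ = 2 * s * ⨆ i, |νhat i - ν i| := by ring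
  exact ⟨hcone, hl1, sqrt_sum_sq_le_sqrt_mul_iSup_abs (z := νhat - ν) hl1⟩

/-- If `ν` is `s`-sparse and `‖ν̂‖₁ ≤ ‖ν‖₁`, then `z = ν̂ − ν` satisfies
`‖z‖₁ ≤ 2‖z‖_{s,1}`, hence `‖z‖₁ ≤ 2s‖z‖_∞` and `‖z‖₂ ≤ √(2s)‖z‖_∞`. -/
theorem sparse_l1_bounds {n : ℕ} (s : ℕ) (hs : 0 < s) (hsn : s ≤ n)
    (ν νhat : Fin n → ℝ) (hsparse : {i : Fin n | ν i ≠ 0}.toFinset.card ≤ s)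
    (h1 : (∑ i, |νhat i|) ≤ ∑ i, |ν i|) :
    (∑ i, |νhat i - ν i|) ≤ 2 * knorm s (νhat - ν) ∧
    (∑ i, |νhat i - ν i|) ≤ 2 * s * (⨆ i, |νhat i - ν i|) ∧
    Real.sqrt (∑ i, (νhat i - ν i) ^ 2) ≤
      Real.sqrt (2 * s) * (⨆ i, |νhat i - ν i|) :=
  sparse_l1_bounds_general s ν νhat hsparse h1
end
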